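/- Let h : A → B be a function, G' a group, and consider the homomorphism F(h) × id : F(A) × G' → F(B) × G'. Then Ker(F(h) × id) = Ker(F(h)) × {e}, and this equals the set of (F(h) × id)-symmetric paths with respect to the subset A × {e} of F(A) × G'. -/

import Mathlib

/-- `ga` and `gb` are `f`-symmetric with respect to the subset `A`. -/
def IsSymmPair {G H : Type*} [Group G] [Group H] (f : G →* H) (A : Set G)
    (ga gb : G) : Prop :=
  ∃ (n : ℕ) (a b : Fin n → G) (δ : Fin n → ℤ),
    (∀ i, a i ∈ A ∧ b i ∈ A ∧ f (a i) = f (b i) ∧ (δ i = 1 ∨ δ i = -1)) ∧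
    ga = (List.ofFn fun i => a i ^ δ i).prod ∧
    gb = (List.ofFn fun i => b i ^ δ i).prod

/-- The set of `f`-symmetric paths with respect to `A`. -/
def symmPaths {G H : Type*} [Group G] [Group H] (f : G →* H) (A : Set G) : Set G :=
  {g | ∃ ga gb : G, IsSymmPair f A ga gb ∧ g = ga * gb⁻¹}

/-!
Symmetric pairs are built letter by letter, so two homomorphisms out of a free group that agree
under `f` on the generators (and send them into `S`) map every word to a symmetric pair. For `x` in
the kernel, compare `(x, 1)` with `(F(r) x, 1)`, where `r : A → A` picks a representative of each
fibre of `h`: since `r` factors through `h`, `F(r) x = 1`, and `(x, 1)` is a symmetric path.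
-/

section SymmPaths

variable {G H : Type*} [Group G] [Group H] {f : G →* H} {S : Set G}

theorem IsSymmPair.map_eq {ga gb : G} (hp : IsSymmPair f S ga gb) : f ga = f gb := by
  obtain ⟨n, a, b, δ, hab, rfl, rfl⟩ := hp
  simp only [map_list_prod, List.map_ofFn, Function.comp_def, map_zpow, (hab _).2.2.1]

theorem symmPaths_subset_ker : symmPaths f S ⊆ f.ker := by
  rintro _ ⟨ga, gb, hp, rfl⟩
  rw [SetLike.mem_coe, MonoidHom.mem_ker, map_mul, map_inv, hp.map_eq, mul_inv_cancel]

theorem isSymmPair_one : IsSymmPair f S 1 1 :=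
  ⟨0, Fin.elim0, Fin.elim0, Fin.elim0, fun i => i.elim0, by simp, by simp⟩

theorem isSymmPair_zpow {s t : G} (hs : s ∈ S) (ht : t ∈ S) (hst : f s = f t) {δ : ℤ}
    (hδ : δ = 1 ∨ δ = -1) : IsSymmPair f S (s ^ δ) (t ^ δ) :=
  ⟨1, fun _ => s, fun _ => t, fun _ => δ, fun _ => ⟨hs, ht, hst, hδ⟩, by simp, by simp⟩

theorem IsSymmPair.mul {ga gb ga' gb' : G} (hp : IsSymmPair f S ga gb)
    (hp' : IsSymmPair f S ga' gb') : IsSymmPair f S (ga * ga') (gb * gb') := by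
  obtain ⟨n, a, b, δ, hab, rfl, rfl⟩ := hp
  obtain ⟨m, a', b', δ', hab', rfl, rfl⟩ := hp'
  refine ⟨n + m, Fin.append a a', Fin.append b b', Fin.append δ δ',
    Fin.addCases (by simpa using hab) (by simpa using hab'), ?_, ?_⟩ <;>
  · rw [← List.prod_append, ← List.ofFn_fin_append]
    congr 2
    ext i
    refine Fin.addCases (fun i => ?_) (fun i => ?_) i <;> simp

theorem isSymmPair_of_freeGroup {X : Type*} (u v : FreeGroup X →* G)
    (hu : ∀ x, u (.of x) ∈ S) (hv : ∀ x, v (.of x) ∈ S)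
    (huv : ∀ x, f (u (.of x)) = f (v (.of x))) (w : FreeGroup X) :
    IsSymmPair f S (u w) (v w) := by
  induction w with
  | C1 => simpa using isSymmPair_one
  | of x => simpa using isSymmPair_zpow (hu x) (hv x) (huv x) (Or.inl rfl)
  | inv_of x _ => simpa using isSymmPair_zpow (hu x) (hv x) (huv x) (Or.inr rfl)
  | mul x y hx hy => simpa using hx.mul hy

end SymmPaths

theorem FreeGroup.exists_map_eq_one_of_map_eq_one {A B : Type*} {h : A → B} {x : FreeGroup A}
    (hx : FreeGroup.map h x = 1) : ∃ r : A → A, (∀ a, h (r a) = h a) ∧ FreeGroup.map r x = 1 := by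
  rcases isEmpty_or_nonempty A with _ | _
  · exact ⟨id, fun _ => rfl, Subsingleton.elim _ _⟩
  · refine ⟨Function.invFun h ∘ h, fun a => Function.invFun_eq ⟨a, rfl⟩, ?_⟩
    rw [← FreeGroup.map.comp, hx, _root_.map_one]

theorem coe_ker_prodMap_id {G G' H : Type*} [Group G] [Group G'] [Group H] (f : G →* H) :
    ((f.prodMap (MonoidHom.id G')).ker : Set (G × G')) = (f.ker : Set G) ×ˢ ({1} : Set G') := by
  rw [MonoidHom.ker_prodMap, MonoidHom.ker_id, Subgroup.coe_prod, Subgroup.coe_bot]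

theorem ker_prodMap_id_subset_symmPaths {A B G' : Type*} [Group G'] (h : A → B) :
    (((FreeGroup.map h).prodMap (MonoidHom.id G')).ker : Set (FreeGroup A × G')) ⊆
      symmPaths ((FreeGroup.map h).prodMap (MonoidHom.id G'))
        ((Set.range (FreeGroup.of : A → FreeGroup A)) ×ˢ ({1} : Set G')) := by
  rintro ⟨x, g⟩ hxg
  obtain ⟨hx, rfl⟩ : FreeGroup.map h x = 1 ∧ g = 1 := by
    simpa using hxg
  obtain ⟨r, hr, hrx⟩ := FreeGroup.exists_map_eq_one_of_map_eq_one hx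
  let u := MonoidHom.inl (FreeGroup A) G'
  refine ⟨u x, u (FreeGroup.map r x), ?_, by simp [u, hrx]⟩
  refine isSymmPair_of_freeGroup u (u.comp (FreeGroup.map r)) (fun a => ?_) (fun a => ?_)
    (fun a => by simp [u, hr]) x
  exacts [Set.mk_mem_prod (Set.mem_range_self a) rfl,
    Set.mk_mem_prod (Set.mem_range_self (r a)) rfl]

theorem ker_prodMap_eq_symmPaths {A B : Type} (h : A → B) (G' : Type) [Group G'] :
    (((FreeGroup.map h).prodMap (MonoidHom.id G')).ker : Set (FreeGroup A × G')) =
        ((FreeGroup.map h).ker : Set (FreeGroup A)) ×ˢ ({1} : Set G') ∧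
    (((FreeGroup.map h).prodMap (MonoidHom.id G')).ker : Set (FreeGroup A × G')) =
      symmPaths ((FreeGroup.map h).prodMap (MonoidHom.id G'))
        ((Set.range (FreeGroup.of : A → FreeGroup A)) ×ˢ ({1} : Set G')) :=
  ⟨coe_ker_prodMap_id (FreeGroup.map h),
    (ker_prodMap_id_subset_symmPaths h).antisymm symmPaths_subset_ker⟩
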